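/- For every Dyck word D, the number of left tunnels of D plus the number of centered tunnels of D equals the number of odd rises of Ψ(D): lt(D) + ct(D) = odr(Ψ(D)). -/

import Mathlib

attribute [local instance] Classical.propDecidable

namespace DyckBij

/-- A word over `Bool` (`true` = up-step `u`, `false` = down-step `d`) is a Dyck word:
equally many `u`'s and `d`'s, and every prefix has at least as many `u`'s as `d`'s. -/
def IsDyck (w : List Bool) : Prop :=
  w.count false = w.count true ∧
    ∀ p : List Bool, p <+: w → p.count false ≤ p.count true

/-- `Matched w i j`: the `u` at (0-indexed) position `i` of `w` is matched (as in matched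
parentheses) with the `d` at position `j`, i.e. `w = A u B d C` with `B` a Dyck word,
`|A| = i` and `j = i + |B| + 1`. -/
def Matched (w : List Bool) (i j : ℕ) : Prop :=
  ∃ A B C : List Bool, IsDyck B ∧ w = A ++ true :: (B ++ false :: C) ∧
    A.length = i ∧ j = i + B.length + 1

/-- Positions `i` and `j` form a matched pair of steps of `w`. -/
def MatchPair (w : List Bool) (i j : ℕ) : Prop :=
  Matched w i j ∨ Matched w j i

/-- The 0-indexed reading order `σ^{(r)}` on a word of length `L`: the first `2r` positions
are read in order, and the remaining positions are read in zigzag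
`2r, L-1, 2r+1, L-2, …` (0-indexed). For `r = 0` this is the zigzag order `σ`. -/
def zigR (r L p : ℕ) : ℕ :=
  if p < 2 * r then p
  else if p % 2 = 0 then p / 2 + r
  else L + r - (p + 1) / 2

/-- The bijection `Ψ_r`: the `p`-th letter of `Ψ_r(w)` is `u` iff the match of the
`σ^{(r)}_p`-th step of `w` does not occur among the previously read steps
`σ^{(r)}_0, …, σ^{(r)}_{p-1}`. -/
noncomputable def psiR (r : ℕ) (w : List Bool) : List Bool :=
  List.ofFn fun p : Fin w.length =>
    if ∃ p' : ℕ, p' < (p : ℕ) ∧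
        MatchPair w (zigR r w.length p') (zigR r w.length (p : ℕ))
    then false else true

/-- The bijection `Ψ = Ψ_0`. -/
noncomputable def psi : List Bool → List Bool := psiR 0

/-- Number of tunnels of `w` with `|A| = |C| + 2r` (midpoint at `x = n + r`),
i.e. decompositions `w = A u B d C` with `B` a Dyck word; tunnels are indexed by `|A|`. -/
noncomputable def tunEq (r : ℕ) (w : List Bool) : ℕ :=
  {i : ℕ | ∃ A B C : List Bool, IsDyck B ∧ w = A ++ true :: (B ++ false :: C) ∧
    A.length = i ∧ A.length = C.length + 2 * r}.ncard

/-- Number of tunnels of `w` with `|A| > |C| + 2r` (midpoint in `x > n + r`). -/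
noncomputable def tunGt (r : ℕ) (w : List Bool) : ℕ :=
  {i : ℕ | ∃ A B C : List Bool, IsDyck B ∧ w = A ++ true :: (B ++ false :: C) ∧
    A.length = i ∧ C.length + 2 * r < A.length}.ncard

/-- Number of tunnels of `w` with `|A| ≤ |C| + 2r` (midpoint in `x ≤ n + r`). -/
noncomputable def tunLe (r : ℕ) (w : List Bool) : ℕ :=
  {i : ℕ | ∃ A B C : List Bool, IsDyck B ∧ w = A ++ true :: (B ++ false :: C) ∧
    A.length = i ∧ A.length ≤ C.length + 2 * r}.ncard

/-- Number of centered tunnels `ct(w)`. -/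
noncomputable def ctun (w : List Bool) : ℕ := tunEq 0 w

/-- Number of right tunnels `rt(w)`. -/
noncomputable def rtun (w : List Bool) : ℕ := tunGt 0 w

/-- Number of left tunnels `lt(w)`: tunnels with `|A| < |C|`. -/
noncomputable def ltun (w : List Bool) : ℕ :=
  {i : ℕ | ∃ A B C : List Bool, IsDyck B ∧ w = A ++ true :: (B ++ false :: C) ∧
    A.length = i ∧ A.length < C.length}.ncard

/-- Number of multitunnels of `w` with `|A| = |C| + 2r` (midpoint at `x = n + r`):
decompositions `w = A B C` with `B` a nonempty Dyck word, indexed by `(|A|, |B|)`. -/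
noncomputable def mtunEq (r : ℕ) (w : List Bool) : ℕ :=
  {q : ℕ × ℕ | ∃ A B C : List Bool, IsDyck B ∧ B ≠ [] ∧ w = A ++ B ++ C ∧
    A.length = q.1 ∧ B.length = q.2 ∧ A.length = C.length + 2 * r}.ncard

/-- Number of centered multitunnels `cmt(w)`. -/
noncomputable def cmtun (w : List Bool) : ℕ := mtunEq 0 w

/-- Number of hills `h(w)`: decompositions `w = X u d Y` with `X, Y` Dyck words. -/
noncomputable def numHills (w : List Bool) : ℕ :=
  {i : ℕ | ∃ X Y : List Bool, IsDyck X ∧ IsDyck Y ∧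
    w = X ++ true :: false :: Y ∧ X.length = i}.ncard

/-- Number of hills of `w` lying in `x > 2r`, i.e. with `|X| ≥ 2r`. -/
noncomputable def numHillsAfter (r : ℕ) (w : List Bool) : ℕ :=
  {i : ℕ | ∃ X Y : List Bool, IsDyck X ∧ IsDyck Y ∧
    w = X ++ true :: false :: Y ∧ X.length = i ∧ 2 * r ≤ X.length}.ncard

/-- Number of arches (equivalently, returns) `ret(w)`: decompositions
`w = X (u B d) Y` with `X, B, Y` Dyck words. -/
noncomputable def numArches (w : List Bool) : ℕ :=
  {i : ℕ | ∃ X B Y : List Bool, IsDyck X ∧ IsDyck B ∧ IsDyck Y ∧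
    w = X ++ true :: (B ++ false :: Y) ∧ X.length = i}.ncard

/-- Number of arches of `w` lying in `x ≥ 2r`, i.e. with `|X| ≥ 2r`. -/
noncomputable def numArchesAfter (r : ℕ) (w : List Bool) : ℕ :=
  {i : ℕ | ∃ X B Y : List Bool, IsDyck X ∧ IsDyck B ∧ IsDyck Y ∧
    w = X ++ true :: (B ++ false :: Y) ∧ X.length = i ∧ 2 * r ≤ X.length}.ncard

/-- Number of odd rises `odr(w)`: `u`-steps at odd 1-indexed positions
(even 0-indexed positions). -/
noncomputable def oddRises (w : List Bool) : ℕ :=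
  {p : ℕ | p < w.length ∧ p % 2 = 0 ∧ w.getD p false = true}.ncard

/-- Number of even rises `er(w)`: `u`-steps at even 1-indexed positions
(odd 0-indexed positions). -/
noncomputable def evenRises (w : List Bool) : ℕ :=
  {p : ℕ | p < w.length ∧ p % 2 = 1 ∧ w.getD p false = true}.ncard

/-- Number of odd rises of `w` at 1-indexed positions `> 2r`. -/
noncomputable def oddRisesAfter (r : ℕ) (w : List Bool) : ℕ :=
  {p : ℕ | p < w.length ∧ p % 2 = 0 ∧ 2 * r ≤ p ∧ w.getD p false = true}.ncard

/-- Number of even rises of `w` at 1-indexed positions `> 2r`. -/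
noncomputable def evenRisesAfter (r : ℕ) (w : List Bool) : ℕ :=
  {p : ℕ | p < w.length ∧ p % 2 = 1 ∧ 2 * r ≤ p ∧ w.getD p false = true}.ncard

/-- Number of `u`-steps of `w` at 1-indexed positions `≤ 2r`. -/
noncomputable def upstepsBefore (r : ℕ) (w : List Bool) : ℕ :=
  {p : ℕ | p < w.length ∧ p < 2 * r ∧ w.getD p false = true}.ncard

/-- Number of peaks of `w`: occurrences of the factor `u d`. -/
noncomputable def numPeaks (w : List Bool) : ℕ :=
  {i : ℕ | i + 2 ≤ w.length ∧ w.getD i false = true ∧ w.getD (i + 1) true = false}.ncard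

/-- Number of occurrences in `w` of a factor of length 3 beginning with `u`
and ending with `d` (occurrences of `u⋆d`). -/
noncomputable def numUStarD (w : List Bool) : ℕ :=
  {i : ℕ | i + 3 ≤ w.length ∧ w.getD i false = true ∧ w.getD (i + 2) true = false}.ncard

/-- `ih(w)`: 1 if `w` begins with the factor `u d`, else 0. -/
noncomputable def initHill (w : List Bool) : ℕ :=
  if w.take 2 = [true, false] then 1 else 0

/-- `fh(w)`: 1 if `w = X u d` with `X` a Dyck word, else 0. -/
noncomputable def finHill (w : List Bool) : ℕ :=
  if ∃ X : List Bool, IsDyck X ∧ w = X ++ [true, false] then 1 else 0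

/-- `π` avoids the pattern 321. -/
def Avoids321 {n : ℕ} (π : Equiv.Perm (Fin n)) : Prop :=
  ¬ ∃ i j k : Fin n, i < j ∧ j < k ∧ π k < π j ∧ π j < π i

/-- `π` avoids the pattern 132. -/
def Avoids132 {n : ℕ} (π : Equiv.Perm (Fin n)) : Prop :=
  ¬ ∃ i j k : Fin n, i < j ∧ j < k ∧ π i < π k ∧ π k < π j

/-- Number of fixed points of `π`. -/
noncomputable def fixedPts {n : ℕ} (π : Equiv.Perm (Fin n)) : ℕ :=
  {i : Fin n | π i = i}.ncard

/-- Number of excedances of `π`. -/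
noncomputable def excedances {n : ℕ} (π : Equiv.Perm (Fin n)) : ℕ :=
  {i : Fin n | i < π i}.ncard

/-- Number of descents of `π`. -/
noncomputable def descents {n : ℕ} (π : Equiv.Perm (Fin n)) : ℕ :=
  {i : ℕ | ∃ (h1 : i < n) (h2 : i + 1 < n), π ⟨i + 1, h2⟩ < π ⟨i, h1⟩}.ncard

/-- `α_r(π) = #{i : π(i) = i + r}` (stated 0-indexed, equivalent to the 1-indexed version). -/
noncomputable def alphaStat {n : ℕ} (r : ℕ) (π : Equiv.Perm (Fin n)) : ℕ :=
  {i : Fin n | (π i : ℕ) = (i : ℕ) + r}.ncard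

/-- `β_r(π) = #{i : i > r, π(i) = i}` (for 1-indexed `i`; 0-indexed this is `r ≤ i`). -/
noncomputable def betaStat {n : ℕ} (r : ℕ) (π : Equiv.Perm (Fin n)) : ℕ :=
  {i : Fin n | r ≤ (i : ℕ) ∧ π i = i}.ncard


/-! Reading `D` in the zigzag order, position `2i` of `Ψ(D)` (0-indexed) is reached right after
the first `i` and the last `i` steps of `D`, and it reads step `i`. So it carries a `u` exactly
when step `i` is an up-step whose matching down-step is not among the last `i` steps, that is,
when `D` has a tunnel `A u B d C` with `|A| = i ≤ |C|`. The odd rises of `Ψ(D)` are therefore in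
bijection with the left and centered tunnels of `D`. -/

def mirror (w : List Bool) : List Bool := (w.map not).reverse

@[simp]
lemma mirror_mirror (w : List Bool) : mirror (mirror w) = w := by
  simp [mirror, List.map_reverse, Function.comp_def]

@[simp]
lemma length_mirror (w : List Bool) : (mirror w).length = w.length := by
  simp [mirror]

lemma count_map_not (w : List Bool) (b : Bool) : (w.map not).count b = w.count (!b) := by
  simpa using List.count_map_of_injective w not (fun a b h => by simpa using h) (!b)

lemma count_mirror (w : List Bool) (b : Bool) : (mirror w).count b = w.count (!b) := by
  simp [mirror, List.count_reverse, count_map_not]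

lemma IsDyck.count_true_le_of_suffix {w s : List Bool} (hw : IsDyck w) (hs : s <:+ w) :
    s.count true ≤ s.count false := by
  obtain ⟨t, rfl⟩ := hs
  have hbal := hw.1
  have ht := hw.2 t (List.prefix_append t s)
  simp only [List.count_append] at hbal
  omega

lemma IsDyck.mirror {w : List Bool} (hw : IsDyck w) : IsDyck (mirror w) := by
  refine ⟨by simp [count_mirror, hw.1], fun p ⟨t, ht⟩ => ?_⟩
  have hsuf : (p.map not).reverse <:+ w := by
    refine ⟨(t.map not).reverse, ?_⟩
    simpa [DyckBij.mirror, List.map_reverse, Function.comp_def] using congrArg DyckBij.mirror ht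
  simpa [count_map_not] using hw.count_true_le_of_suffix hsuf

lemma IsDyck.length_eq_of_append_false {B C B' C' : List Bool}
    (h : B ++ false :: C = B' ++ false :: C') (hB : IsDyck B) (hB' : IsDyck B') :
    B.length = B'.length := by
  by_contra hne
  wlog hlt : B.length < B'.length generalizing B C B' C'
  · exact this h.symm hB' hB (Ne.symm hne) (by omega)
  -- `B d` would be a prefix of the Dyck word `B'` with more `d`s than `u`s.
  have hlen : (B ++ [false]).length ≤ B'.length := by
    rw [List.length_append, List.length_singleton]
    omega
  have hpre : B ++ [false] <+: B' :=
    List.prefix_of_prefix_length_le ⟨C, by simp⟩ ⟨false :: C', h.symm⟩ hlen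
  have hcount := hB'.2 _ hpre
  have hbal := hB.1
  simp [List.count_append] at hcount
  omega

lemma eq_of_tunnel_decomp {w A B C A' B' C' : List Bool}
    (hw : w = A ++ true :: (B ++ false :: C)) (hw' : w = A' ++ true :: (B' ++ false :: C'))
    (hB : IsDyck B) (hB' : IsDyck B') (hA : A.length = A'.length) :
    A = A' ∧ B = B' ∧ C = C' := by
  obtain ⟨rfl, hrest⟩ := List.append_inj (hw.symm.trans hw') hA
  have hBC : B ++ false :: C = B' ++ false :: C' := List.cons_injective hrest
  obtain ⟨rfl, hC⟩ := List.append_inj hBC (hB.length_eq_of_append_false hBC hB')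
  exact ⟨rfl, rfl, List.cons_injective hC⟩

lemma exists_isDyck_append_false {R : List Bool} (hR : R.count true < R.count false) :
    ∃ B C, IsDyck B ∧ R = B ++ false :: C := by
  -- `B d` is the shortest prefix of `R` with more `d`s than `u`s.
  have hex : ∃ k, (R.take k).count true < (R.take k).count false :=
    ⟨R.length, by simpa using hR⟩
  have hmin := fun l => Nat.find_min (m := l) hex
  obtain ⟨m, hm⟩ : ∃ m, Nat.find hex = m + 1 :=
    Nat.exists_eq_succ_of_ne_zero fun h0 => by simpa [h0] using Nat.find_spec hex
  have hmR : m < R.length := by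
    have := Nat.find_min' hex (m := R.length) (by simpa using hR)
    omega
  have hspec := Nat.find_spec hex
  have hB := hmin m (by omega)
  rw [hm, List.take_succ_eq_append_getElem hmR] at hspec
  have hRm : R[m] = false := by
    by_contra h
    simp only [Bool.not_eq_false] at h
    simp [List.count_append, h] at hspec
    omega
  refine ⟨R.take m, R.drop (m + 1), ⟨?_, fun p hp => ?_⟩, ?_⟩
  · simp [List.count_append, hRm] at hspec
    omega
  · rw [List.prefix_iff_eq_take, List.take_take] at hp
    have := hmin (min p.length m) (by omega)
    rw [hp]
    omega
  · rw [← hRm, ← List.drop_eq_getElem_cons hmR, List.take_append_drop]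

lemma Matched.lt {w : List Bool} {i j : ℕ} (h : Matched w i j) : i < j := by
  obtain ⟨A, B, C, -, -, rfl, rfl⟩ := h
  omega

lemma Matched.lt_length {w : List Bool} {i j : ℕ} (h : Matched w i j) : j < w.length := by
  obtain ⟨A, B, C, -, rfl, rfl, rfl⟩ := h
  simp only [List.length_append, List.length_cons]
  omega

lemma Matched.getElem?_left {w : List Bool} {i j : ℕ} (h : Matched w i j) :
    w[i]? = some true := by
  obtain ⟨A, B, C, -, rfl, rfl, rfl⟩ := h
  simp

lemma Matched.getElem?_right {w : List Bool} {i j : ℕ} (h : Matched w i j) :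
    w[j]? = some false := by
  obtain ⟨A, B, C, -, rfl, rfl, rfl⟩ := h
  rw [List.getElem?_append_right (by omega), show A.length + B.length + 1 - A.length =
    B.length + 1 by omega]
  simp

lemma Matched.mirror {w : List Bool} {i j : ℕ} (h : Matched w i j) :
    Matched (mirror w) (w.length - 1 - j) (w.length - 1 - i) := by
  obtain ⟨A, B, C, hB, rfl, rfl, rfl⟩ := h
  refine ⟨DyckBij.mirror C, DyckBij.mirror B, DyckBij.mirror A, hB.mirror, ?_, ?_, ?_⟩
  · simp [DyckBij.mirror]
  · simp only [length_mirror, List.length_append, List.length_cons]; omega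
  · simp only [length_mirror, List.length_append, List.length_cons]; omega

lemma Matched.right_unique {w : List Bool} {i j j' : ℕ} (h : Matched w i j)
    (h' : Matched w i j') : j = j' := by
  obtain ⟨A, B, C, hB, hw, hA, rfl⟩ := h
  obtain ⟨A', B', C', hB', hw', hA', rfl⟩ := h'
  obtain ⟨-, rfl, -⟩ := eq_of_tunnel_decomp hw hw' hB hB' (hA.trans hA'.symm)
  rfl

lemma Matched.not_matched_right {w : List Bool} {i j k : ℕ} (h : Matched w i j) :
    ¬ Matched w k i := fun h' => by
  simpa [h.getElem?_left] using h'.getElem?_right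

lemma Matched.matchPair_iff {w : List Bool} {i j k : ℕ} (h : Matched w i j) :
    MatchPair w k i ↔ k = j := by
  refine ⟨fun hk => hk.elim (fun h' => (h.not_matched_right h').elim) ?_, ?_⟩
  · exact fun h' => (h.right_unique h').symm
  · rintro rfl
    exact Or.inr h

lemma IsDyck.exists_matched_of_true {w : List Bool} {i : ℕ} (hw : IsDyck w) (hi : i < w.length)
    (h : w[i] = true) : ∃ j, Matched w i j := by
  have hsplit : w = w.take i ++ true :: w.drop (i + 1) := by
    rw [← h, ← List.drop_eq_getElem_cons hi, List.take_append_drop]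
  have hA := hw.2 _ (List.take_prefix i w)
  have hbal := hw.1
  rw [hsplit] at hbal
  have hR : (w.drop (i + 1)).count true < (w.drop (i + 1)).count false := by
    simp [List.count_append] at hbal
    omega
  obtain ⟨B, C, hB, hR⟩ := exists_isDyck_append_false hR
  exact ⟨_, w.take i, B, C, hB, hR ▸ hsplit, by rw [List.length_take]; omega, rfl⟩

lemma IsDyck.exists_matched_of_false {w : List Bool} {j : ℕ} (hw : IsDyck w) (hj : j < w.length)
    (h : w[j] = false) : ∃ i, Matched w i j := by
  have hj' : w.length - 1 - j < (DyckBij.mirror w).length := by rw [length_mirror]; omega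
  have hjj : w.length - 1 - (w.length - 1 - j) = j := by omega
  have hmirror : (DyckBij.mirror w)[w.length - 1 - j] = true := by
    simp [DyckBij.mirror, List.getElem_reverse, hjj, h]
  obtain ⟨k, hk⟩ := hw.mirror.exists_matched_of_true hj' hmirror
  have hkw := hk.mirror
  rw [mirror_mirror, length_mirror, hjj] at hkw
  exact ⟨_, hkw⟩

lemma lt_length_of_getD_eq_true {w : List Bool} {p : ℕ} (h : w.getD p false = true) :
    p < w.length := by
  by_contra! hp
  rw [List.getD_eq_default _ _ hp] at h
  cases h

lemma oddRises_eq_ncard (w : List Bool) :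
    oddRises w = {i | w.getD (2 * i) false = true}.ncard := by
  have himage : {p | p < w.length ∧ p % 2 = 0 ∧ w.getD p false = true} =
      (fun i => 2 * i) '' {i | w.getD (2 * i) false = true} := by
    ext p
    simp only [Set.mem_image]
    constructor
    · rintro ⟨-, hp, h⟩
      obtain ⟨k, rfl⟩ := Nat.dvd_of_mod_eq_zero hp
      exact ⟨k, h, rfl⟩
    · rintro ⟨i, hi, rfl⟩
      exact ⟨lt_length_of_getD_eq_true hi, by omega, hi⟩
  rw [oddRises, himage, Set.ncard_image_of_injective _ (mul_right_injective₀ two_ne_zero)]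

lemma length_psi (w : List Bool) : (psi w).length = w.length := by
  simp [psi, psiR]

lemma zigR_zero_two_mul (L i : ℕ) : zigR 0 L (2 * i) = i := by
  simp [zigR]

lemma zigR_zero_two_mul_add_one (L k : ℕ) : zigR 0 L (2 * k + 1) = L - (k + 1) := by
  simp [zigR, Nat.add_mod, show (2 * k + 1 + 1) / 2 = k + 1 by omega]

lemma exists_lt_two_mul_zigR_zero_iff {L i : ℕ} (hi : i ≤ L) (P : ℕ → Prop) :
    (∃ p < 2 * i, P (zigR 0 L p)) ↔ ∃ m < L, (m < i ∨ L - i ≤ m) ∧ P m := by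
  constructor
  · rintro ⟨p, hp, hP⟩
    obtain ⟨k, rfl | rfl⟩ := Nat.even_or_odd' p
    · rw [zigR_zero_two_mul] at hP
      exact ⟨k, by omega, Or.inl (by omega), hP⟩
    · rw [zigR_zero_two_mul_add_one] at hP
      exact ⟨_, by omega, Or.inr (by omega), hP⟩
  · rintro ⟨m, hm, hmi | hmi, hP⟩
    · exact ⟨2 * m, by omega, by rwa [zigR_zero_two_mul]⟩
    · refine ⟨2 * (L - 1 - m) + 1, by omega, ?_⟩
      rwa [zigR_zero_two_mul_add_one, show L - (L - 1 - m + 1) = m by omega]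

lemma psi_getD_two_mul_eq_true_iff_not_matchPair (w : List Bool) (i : ℕ) :
    (psi w).getD (2 * i) false = true ↔
      2 * i < w.length ∧
        ∀ m < w.length, (m < i ∨ w.length - i ≤ m) → ¬ MatchPair w m i := by
  by_cases hi : 2 * i < w.length
  · rw [List.getD_eq_getElem _ _ (by rwa [length_psi])]
    simp only [psi, psiR, List.getElem_ofFn, zigR_zero_two_mul]
    have hread := exists_lt_two_mul_zigR_zero_iff (by omega : i ≤ w.length) (MatchPair w · i)
    simp only [hread]
    simp [hi]
  · rw [List.getD_eq_default _ _ (by rw [length_psi]; omega)]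
    simp [hi]

theorem IsDyck.psi_getD_two_mul_eq_true_iff {D : List Bool} (hD : IsDyck D) (i : ℕ) :
    (psi D).getD (2 * i) false = true ↔ ∃ j, Matched D i j ∧ i + j < D.length := by
  rw [psi_getD_two_mul_eq_true_iff_not_matchPair]
  constructor
  · rintro ⟨hi, hnot⟩
    cases hDi : D[i]
    · obtain ⟨k, hk⟩ := hD.exists_matched_of_false (by omega) hDi
      exact (hnot k (by have := hk.lt; omega) (Or.inl hk.lt) (Or.inl hk)).elim
    · obtain ⟨j, hj⟩ := hD.exists_matched_of_true (by omega) hDi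
      refine ⟨j, hj, by_contra fun hij => hnot j hj.lt_length (Or.inr (by omega)) ?_⟩
      exact hj.matchPair_iff.2 rfl
  · rintro ⟨j, hj, hij⟩
    have := hj.lt
    refine ⟨by omega, fun m _ hm hpair => ?_⟩
    obtain rfl := hj.matchPair_iff.1 hpair
    omega

def tunnelStarts (w : List Bool) (P : ℕ → ℕ → Prop) : Set ℕ :=
  {i | ∃ A B C : List Bool, IsDyck B ∧ w = A ++ true :: (B ++ false :: C) ∧ A.length = i ∧
    P A.length C.length}

lemma mem_tunnelStarts_iff_exists_matched {w : List Bool} {P : ℕ → ℕ → Prop} {i : ℕ} :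
    i ∈ tunnelStarts w P ↔ ∃ j, Matched w i j ∧ P i (w.length - 1 - j) := by
  have length_sub_tunnel_end (A B C : List Bool) :
      (A ++ true :: (B ++ false :: C)).length - 1 - (A.length + B.length + 1) = C.length := by
    simp
    omega
  constructor
  · rintro ⟨A, B, C, hB, rfl, rfl, hP⟩
    refine ⟨_, ⟨A, B, C, hB, rfl, rfl, rfl⟩, ?_⟩
    rwa [length_sub_tunnel_end]
  · rintro ⟨j, ⟨A, B, C, hB, rfl, rfl, rfl⟩, hP⟩
    refine ⟨A, B, C, hB, rfl, rfl, ?_⟩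
    rwa [length_sub_tunnel_end] at hP

lemma tunnelStarts_finite (w : List Bool) (P : ℕ → ℕ → Prop) : (tunnelStarts w P).Finite :=
  (Set.finite_Iio w.length).subset fun i hi => by
    obtain ⟨j, hj, -⟩ := mem_tunnelStarts_iff_exists_matched.1 hi
    exact hj.lt.trans hj.lt_length

lemma tunnelStarts_or (w : List Bool) (P Q : ℕ → ℕ → Prop) :
    tunnelStarts w (fun a c => P a c ∨ Q a c) = tunnelStarts w P ∪ tunnelStarts w Q := by
  ext i
  constructor
  · rintro ⟨A, B, C, hB, hw, hA, hP | hQ⟩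
    exacts [Or.inl ⟨A, B, C, hB, hw, hA, hP⟩, Or.inr ⟨A, B, C, hB, hw, hA, hQ⟩]
  · rintro (⟨A, B, C, hB, hw, hA, hP⟩ | ⟨A, B, C, hB, hw, hA, hQ⟩)
    exacts [⟨A, B, C, hB, hw, hA, Or.inl hP⟩, ⟨A, B, C, hB, hw, hA, Or.inr hQ⟩]

lemma disjoint_tunnelStarts (w : List Bool) {P Q : ℕ → ℕ → Prop}
    (hPQ : ∀ a c, P a c → ¬ Q a c) : Disjoint (tunnelStarts w P) (tunnelStarts w Q) := by
  rw [Set.disjoint_left]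
  rintro i ⟨A, B, C, hB, hw, hA, hP⟩ ⟨A', B', C', hB', hw', hA', hQ⟩
  obtain ⟨rfl, -, rfl⟩ := eq_of_tunnel_decomp hw hw' hB hB' (hA.trans hA'.symm)
  exact hPQ _ _ hP hQ

lemma ltun_add_ctun_eq_ncard_tunnelStarts (w : List Bool) :
    ltun w + ctun w = (tunnelStarts w (· ≤ ·)).ncard := by
  have hle :
      tunnelStarts w (· ≤ ·) = tunnelStarts w (· < ·) ∪ tunnelStarts w (· = ·) := by
    simp only [le_iff_lt_or_eq, tunnelStarts_or]
  have hctun : ctun w = (tunnelStarts w (· = ·)).ncard := by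
    simp [ctun, tunEq, tunnelStarts]
  rw [hle, Set.ncard_union_eq (disjoint_tunnelStarts w fun a c => ne_of_lt)
    (tunnelStarts_finite w _) (tunnelStarts_finite w _), hctun]
  rfl

/-- for every Dyck word `D`, `lt(D) + ct(D) = odr(Ψ(D))`. -/
theorem ltun_add_ctun_eq_oddRises_psi (D : List Bool) (hD : IsDyck D) :
    ltun D + ctun D = oddRises (psi D) := by
  rw [ltun_add_ctun_eq_ncard_tunnelStarts, oddRises_eq_ncard]
  congr 1
  ext i
  rw [mem_tunnelStarts_iff_exists_matched, Set.mem_ofPred_eq, hD.psi_getD_two_mul_eq_true_iff]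
  exact exists_congr fun j => and_congr_right fun hj => by have := hj.lt_length; omega

end DyckBij
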